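/- In an N-bidder second-price auction with value upper bound v̄ = max V, consider the information structure that gives the (tie-broken) lowest-value bidder i_* the signal v̄ and all other bidders the signal 0, and the strategy profile of bidding one's signal. Under the restriction that no bidder ever bids an amount sure to strictly exceed her value, this is a Bayes Nash equilibrium; under it the item always goes to a minimal-value bidder, expected welfare equals E[min_i v_i], revenue is 0, and aggregate bidder surplus equals E[min_i v_i]. -/
import Mathlib


open scoped Classical BigOperators

/-- Highest coordinate. -/
noncomputable def maxVal {N : ℕ} (β : Fin N → ℝ) : ℝ := sSup (Set.range β)

/-- Lowest coordinate. -/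
noncomputable def minVal {N : ℕ} (β : Fin N → ℝ) : ℝ := sInf (Set.range β)

/-- Second-highest coordinate. -/
noncomputable def secmax {N : ℕ} (β : Fin N → ℝ) : ℝ :=
  sInf {x | ∃ i : Fin N, x = sSup {y | ∃ j : Fin N, j ≠ i ∧ y = β j}}

/-- Uniform tie-breaking winning share. -/
noncomputable def winShare {N : ℕ} (β : Fin N → ℝ) (i : Fin N) : ℝ :=
  if β i = maxVal β then
    1 / ((Finset.univ.filter fun j => β j = maxVal β).card : ℝ)
  else 0

/-- Probability of the state `(v, k)` where `k` is the uniformly tie-broken minimizer. -/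
noncomputable def wMin {N : ℕ} (lam : (Fin N → ℝ) → ℝ) (v : Fin N → ℝ) (k : Fin N) : ℝ :=
  lam v * (if v k = minVal v then
    1 / ((Finset.univ.filter fun i => v i = minVal v).card : ℝ) else 0)

/-- The signal of bidder `i` in state `(v, k)`: the tie-broken lowest-value bidder `k`
receives the signal `v̄` (the maximal possible value) and all others the null signal. -/
noncomputable def sigMin {N : ℕ} (vbar : ℝ) (k i : Fin N) : ℝ :=
  if i = k then vbar else 0

section aux
variable {N : ℕ}

lemma maxVal_eq' (β : Fin N → ℝ) {x : ℝ} (h1 : ∃ j, β j = x) (h2 : ∀ j, β j ≤ x) :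
    maxVal β = x := by
  obtain ⟨j, hj⟩ := h1
  exact IsGreatest.csSup_eq ⟨⟨j, hj⟩, by rintro y ⟨j', rfl⟩; exact h2 j'⟩

lemma minVal_eq' (β : Fin N → ℝ) {x : ℝ} (h1 : ∃ j, β j = x) (h2 : ∀ j, x ≤ β j) :
    minVal β = x := by
  obtain ⟨j, hj⟩ := h1
  exact IsLeast.csInf_eq ⟨⟨j, hj⟩, by rintro y ⟨j', rfl⟩; exact h2 j'⟩

lemma supT_eq (β : Fin N → ℝ) (i : Fin N) {x : ℝ}
    (h1 : ∃ j, j ≠ i ∧ β j = x) (h2 : ∀ j, j ≠ i → β j ≤ x) :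
    sSup {y | ∃ j, j ≠ i ∧ y = β j} = x := by
  obtain ⟨j, hij, hj⟩ := h1
  exact IsGreatest.csSup_eq ⟨⟨j, hij, hj.symm⟩, by rintro y ⟨j', hj', rfl⟩; exact h2 j' hj'⟩

lemma secmax_eq' (β : Fin N → ℝ) {m : ℝ} (i0 : Fin N)
    (h0 : sSup {y | ∃ j, j ≠ i0 ∧ y = β j} = m)
    (hlb : ∀ i, m ≤ sSup {y | ∃ j, j ≠ i ∧ y = β j}) :
    secmax β = m :=
  IsLeast.csInf_eq ⟨⟨i0, h0.symm⟩, by rintro x ⟨i, rfl⟩; exact hlb i⟩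

lemma ws_nonneg (β : Fin N → ℝ) (i : Fin N) : 0 ≤ winShare β i := by
  unfold winShare; split
  · positivity
  · exact le_refl _

lemma ws_le_one (β : Fin N → ℝ) (i : Fin N) : winShare β i ≤ 1 := by
  unfold winShare; split
  · rename_i h
    have hm : i ∈ Finset.univ.filter fun j => β j = maxVal β := by simp [h]
    have hc : 1 ≤ (Finset.univ.filter fun j => β j = maxVal β).card :=
      Finset.card_pos.mpr ⟨i, hm⟩
    have hc' : (1:ℝ) ≤ ((Finset.univ.filter fun j => β j = maxVal β).card : ℝ) := by
      exact_mod_cast hc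
    rw [div_le_one (by linarith)]; exact hc'
  · exact zero_le_one

lemma maxVal_sig {c : ℝ} (hc : 0 ≤ c) (k : Fin N) : maxVal (sigMin c k) = c :=
  maxVal_eq' _ ⟨k, by simp [sigMin]⟩
    (fun j => by by_cases h : j = k <;> simp [sigMin, h, hc])

lemma secmax_sig (hN : 2 ≤ N) {c : ℝ} (hc : 0 ≤ c) (k : Fin N) :
    secmax (sigMin c k) = 0 := by
  haveI : Nontrivial (Fin N) := Fin.nontrivial_iff_two_le.mpr hN
  obtain ⟨j0, hj0⟩ := exists_ne k
  apply secmax_eq' _ k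
  · apply supT_eq _ _ ⟨j0, hj0, by simp [sigMin, hj0]⟩
    intro j hj; simp [sigMin, hj]
  · intro i
    obtain ⟨j1, hj1⟩ := exists_ne i
    have hbdd : BddAbove {y | ∃ j, j ≠ i ∧ y = sigMin c k j} :=
      ⟨c, by rintro y ⟨j, hj, rfl⟩; by_cases h : j = k <;> simp [sigMin, h, hc]⟩
    refine le_trans ?_ (le_csSup hbdd ⟨j1, hj1, rfl⟩)
    by_cases h : j1 = k <;> simp [sigMin, h, hc]

lemma filter_sig {c : ℝ} (hc : 0 < c) (k : Fin N) :
    (Finset.univ.filter fun j => sigMin c k j = maxVal (sigMin c k)) = {k} := by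
  rw [maxVal_sig hc.le]
  ext j
  by_cases h : j = k <;> simp [sigMin, h, hc.ne]

lemma ws_sig {c : ℝ} (hc : 0 < c) (k i : Fin N) :
    winShare (sigMin c k) i = if i = k then 1 else 0 := by
  unfold winShare
  rw [filter_sig hc, maxVal_sig hc.le]
  by_cases h : i = k <;> simp [sigMin, h, hc.ne]

lemma maxVal_Q (hN : 2 ≤ N) {vbar b : ℝ} {k i : Fin N} (hik : i ≠ k)
    (hb0 : 0 ≤ b) (hbv : b ≤ vbar) :
    maxVal (Function.update (sigMin vbar k) i b) = vbar := by
  apply maxVal_eq' _ ⟨k, by rw [Function.update_apply]; simp [hik.symm, sigMin]⟩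
  intro j
  rw [Function.update_apply]
  by_cases h : j = i
  · simp [h, hbv]
  · by_cases h' : j = k <;> simp [h, h', sigMin, hik.symm] <;> linarith

lemma secmax_Q (hN : 2 ≤ N) {vbar b : ℝ} {k i : Fin N} (hik : i ≠ k)
    (hb0 : 0 ≤ b) (hbv : b ≤ vbar) :
    secmax (Function.update (sigMin vbar k) i b) = b := by
  set Q := Function.update (sigMin vbar k) i b with hQ
  have hQk : Q k = vbar := by rw [hQ, Function.update_apply]; simp [hik.symm, sigMin]
  have hQi : Q i = b := by rw [hQ]; simp
  have hQo : ∀ j, j ≠ i → j ≠ k → Q j = 0 := by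
    intro j h1 h2; rw [hQ, Function.update_apply]; simp [h1, h2, sigMin]
  have hQle : ∀ j, Q j ≤ vbar := by
    intro j
    by_cases h1 : j = i; · rw [h1, hQi]; exact hbv
    by_cases h2 : j = k; · rw [h2, hQk]
    rw [hQo j h1 h2]; linarith
  have hsk : sSup {y | ∃ j, j ≠ k ∧ y = Q j} = b := by
    apply supT_eq _ _ ⟨i, hik, hQi⟩
    intro j hj
    by_cases h1 : j = i; · rw [h1, hQi]
    rw [hQo j h1 hj]; exact hb0
  apply secmax_eq' _ k hsk
  intro i'
  by_cases h : i' = k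
  · rw [h, hsk]
  · have hbdd : BddAbove {y | ∃ j, j ≠ i' ∧ y = Q j} :=
      ⟨vbar, by rintro y ⟨j, hj, rfl⟩; exact hQle j⟩
    have : vbar ≤ sSup {y | ∃ j, j ≠ i' ∧ y = Q j} := by
      refine le_of_eq_of_le hQk.symm (le_csSup hbdd ⟨k, fun hc => h hc.symm, rfl⟩)
    linarith

lemma ws_Q_zero (hN : 2 ≤ N) {vbar b : ℝ} {k i : Fin N} (hik : i ≠ k)
    (hb0 : 0 ≤ b) (hbv : b < vbar) :
    winShare (Function.update (sigMin vbar k) i b) i = 0 := by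
  unfold winShare
  rw [maxVal_Q hN hik hb0 hbv.le]
  simp [hbv.ne]

end aux

/-- Minimum bidder surplus with zero revenue: giving the (tie-broken) lowest-value bidder
the signal `v̄` and everyone else the null signal makes bidding one's signal a Bayes Nash
equilibrium (against deviations never bidding outside `[0, v̄]`); the item always goes to
a minimal-value bidder, welfare equals `E[min v]`, revenue is `0`, and aggregate bidder
surplus equals `E[min v]`. -/
theorem min_welfare_zero_revenue (N : ℕ) (hN : 2 ≤ N) (vbar : ℝ)
    (PV : Finset (Fin N → ℝ)) (lam : (Fin N → ℝ) → ℝ)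
    (hl0 : ∀ v, 0 ≤ lam v) (hl1 : ∑ v ∈ PV, lam v = 1)
    (hval : ∀ v ∈ PV, ∀ i, v i ∈ Set.Icc (0:ℝ) vbar) :
    -- (a) bidding one's signal is a Bayes Nash equilibrium within bids in [0, v̄]
    (∀ i (d : ℝ → ℝ), (∀ t, d t ∈ Set.Icc (0:ℝ) vbar) →
      (∑ v ∈ PV, ∑ k : Fin N, wMin lam v k *
          (winShare (Function.update (fun j => sigMin vbar k j) i (d (sigMin vbar k i))) i *
            (v i - secmax (Function.update (fun j => sigMin vbar k j) i
              (d (sigMin vbar k i))))))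
      ≤ ∑ v ∈ PV, ∑ k : Fin N, wMin lam v k *
          (winShare (fun j => sigMin vbar k j) i *
            (v i - secmax (fun j => sigMin vbar k j)))) ∧
    -- (b) welfare equals the minimal welfare E[min v]
    (∑ v ∈ PV, ∑ k : Fin N, wMin lam v k *
        ∑ i, winShare (fun j => sigMin vbar k j) i * v i)
      = ∑ v ∈ PV, lam v * minVal v ∧
    -- (c) revenue is zero
    (∑ v ∈ PV, ∑ k : Fin N, wMin lam v k * secmax (fun j => sigMin vbar k j)) = 0 ∧
    -- (d) aggregate bidder surplus equals E[min v]
    (∑ v ∈ PV, ∑ k : Fin N, wMin lam v k *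
        ∑ i, winShare (fun j => sigMin vbar k j) i *
          (v i - secmax (fun j => sigMin vbar k j)))
      = ∑ v ∈ PV, lam v * minVal v := by
  haveI : NeZero N := ⟨by omega⟩
  have i0 : Fin N := ⟨0, by omega⟩
  -- vbar is nonnegative
  have hvbar : 0 ≤ vbar := by
    by_contra h
    push_neg at h
    have hz : ∀ v ∈ PV, lam v = 0 := by
      intro v hv
      exfalso
      have h1 := (hval v hv i0).1
      have h2 := (hval v hv i0).2
      linarith
    rw [Finset.sum_congr rfl hz] at hl1
    simp at hl1
  have heta : ∀ k : Fin N, (fun j => sigMin vbar k j) = sigMin vbar k := fun _ => rfl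
  have hw0 : ∀ v (k : Fin N), 0 ≤ wMin lam v k := by
    intro v k
    unfold wMin
    apply mul_nonneg (hl0 v)
    split
    · positivity
    · exact le_refl _
  -- part (b)
  have hb : (∑ v ∈ PV, ∑ k : Fin N, wMin lam v k *
        ∑ i, winShare (fun j => sigMin vbar k j) i * v i)
      = ∑ v ∈ PV, lam v * minVal v := by
    apply Finset.sum_congr rfl
    intro v hv
    rcases eq_or_lt_of_le hvbar with h0 | h0
    · -- vbar = 0 : all values are 0
      have hvz : ∀ i, v i = 0 := fun i =>
        le_antisymm (le_trans (hval v hv i).2 h0.ge) (hval v hv i).1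
      have hmin : minVal v = 0 := minVal_eq' v ⟨i0, hvz i0⟩ (fun j => (hvz j).ge)
      rw [hmin, mul_zero]
      apply Finset.sum_eq_zero
      intro k _
      have : ∑ i, winShare (fun j => sigMin vbar k j) i * v i = 0 :=
        Finset.sum_eq_zero fun i _ => by rw [hvz, mul_zero]
      rw [this, mul_zero]
    · -- vbar > 0
      have hins : ∀ k : Fin N, (∑ i, winShare (fun j => sigMin vbar k j) i * v i) = v k := by
        intro k
        rw [heta k]
        have h1 : ∀ i : Fin N, winShare (sigMin vbar k) i * v i
            = if i = k then v i else 0 := by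
          intro i
          rw [ws_sig h0]
          by_cases h : i = k <;> simp [h]
        rw [Finset.sum_congr rfl (fun i _ => h1 i)]
        simp
      rw [Finset.sum_congr rfl (fun k _ => by rw [hins k])]
      -- now: ∑ k, wMin lam v k * v k = lam v * minVal v
      obtain ⟨k0, hk0⟩ : ∃ k, v k = minVal v := by
        have hm := Set.Nonempty.csInf_mem (Set.range_nonempty v) (Set.finite_range v)
        obtain ⟨k, hk⟩ := hm
        exact ⟨k, hk⟩
      set c := (Finset.univ.filter fun k => v k = minVal v).card with hcdef
      have hcpos : 0 < c := Finset.card_pos.mpr ⟨k0, by simp [hk0]⟩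
      have hcne : (c : ℝ) ≠ 0 := by positivity
      have step1 : ∀ k : Fin N, wMin lam v k * v k
          = lam v * (if v k = minVal v then (1/(c:ℝ)) * minVal v else 0) := by
        intro k
        unfold wMin
        by_cases h : v k = minVal v <;> simp [h] <;> ring
      rw [Finset.sum_congr rfl (fun k _ => step1 k), ← Finset.mul_sum]
      congr 1
      rw [Finset.sum_ite, Finset.sum_const_zero, add_zero, Finset.sum_const, ← hcdef,
        nsmul_eq_mul]
      field_simp
  -- part (c)
  have hc : (∑ v ∈ PV, ∑ k : Fin N, wMin lam v k * secmax (fun j => sigMin vbar k j)) = 0 := by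
    apply Finset.sum_eq_zero
    intro v _
    apply Finset.sum_eq_zero
    intro k _
    rw [heta k, secmax_sig hN hvbar, mul_zero]
  -- part (d)
  have hd : (∑ v ∈ PV, ∑ k : Fin N, wMin lam v k *
        ∑ i, winShare (fun j => sigMin vbar k j) i *
          (v i - secmax (fun j => sigMin vbar k j)))
      = ∑ v ∈ PV, lam v * minVal v := by
    rw [← hb]
    apply Finset.sum_congr rfl
    intro v _
    apply Finset.sum_congr rfl
    intro k _
    congr 1
    apply Finset.sum_congr rfl
    intro i _
    rw [heta k, secmax_sig hN hvbar, sub_zero]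
  refine ⟨?_, hb, hc, hd⟩
  -- part (a)
  intro i d hdIcc
  apply Finset.sum_le_sum
  intro v hv
  apply Finset.sum_le_sum
  intro k _
  rcases eq_or_lt_of_le hvbar with h0 | h0
  · -- vbar = 0 : the deviation is forced to coincide with the signal
    have hdz : d (sigMin vbar k i) = 0 := by
      have h1 := (hdIcc (sigMin vbar k i)).1
      have h2 := (hdIcc (sigMin vbar k i)).2
      linarith
    have hupd : Function.update (fun j => sigMin vbar k j) i (d (sigMin vbar k i))
        = fun j => sigMin vbar k j := by
      rw [hdz]
      funext j
      rw [Function.update_apply]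
      by_cases h : j = i
      · simp [h, sigMin, ← h0]
      · simp [h]
    rw [hupd]
  · -- vbar > 0
    apply mul_le_mul_of_nonneg_left _ (hw0 v k)
    rw [heta k, secmax_sig hN hvbar, sub_zero]
    have hsig : sigMin vbar k i = if i = k then vbar else 0 := rfl
    have hb0 : 0 ≤ d (sigMin vbar k i) := (hdIcc _).1
    have hbv : d (sigMin vbar k i) ≤ vbar := (hdIcc _).2
    by_cases hik : i = k
    · -- deviating when holding the high signal
      subst hik
      have hupd : Function.update (fun j => sigMin vbar i j) i (d (sigMin vbar i i))
          = sigMin (d (sigMin vbar i i)) i := by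
        funext j
        rw [Function.update_apply]
        by_cases h : j = i <;> simp [h, sigMin]
      rw [hupd, secmax_sig hN hb0, sub_zero, ws_sig h0, if_pos rfl, one_mul]
      have hvi : 0 ≤ v i := (hval v hv i).1
      have h1 := ws_nonneg (sigMin (d (sigMin vbar i i)) i) i
      have h2 := ws_le_one (sigMin (d (sigMin vbar i i)) i) i
      nlinarith
    · -- deviating with a null signal
      rw [ws_sig h0, if_neg hik, zero_mul]
      rw [show (Function.update (fun j => sigMin vbar k j) i (d (sigMin vbar k i)))
          = Function.update (sigMin vbar k) i (d (sigMin vbar k i)) from rfl]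
      rw [secmax_Q hN hik hb0 hbv]
      rcases eq_or_lt_of_le hbv with hbe | hbl
      · -- bid exactly vbar : tie with the winner, pay vbar ≥ value
        have hvle : v i ≤ vbar := (hval v hv i).2
        have hws := ws_nonneg (Function.update (sigMin vbar k) i (d (sigMin vbar k i))) i
        nlinarith
      · -- bid below vbar : lose
        rw [ws_Q_zero hN hik hb0 hbl, zero_mul]
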